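/- arXiv:math/9807157 — 2 statements merged into one kernel-verified Lean document; each statement's English description precedes it below -/
import Mathlib

section
/- Let h be a complex number with exp(h) ≠ 1 and set [x] = (exp(hx/2) − exp(−hx/2))/(exp(h/2) − exp(−h/2)) for x ∈ ℂ. For all complex numbers a, b, c, d such that [c−b+1] ≠ 0 and [b−c−1] ≠ 0, one has −[a−b+1][c−d]/[c−b+1] − [a−c][b−d−1]/[b−c−1] = −[a−d]. (Second identity of (A46).) -/
/-- The q-bracket `[x] = (exp(hx/2) - exp(-hx/2))/(exp(h/2) - exp(-h/2))`. -/
noncomputable def qbr (h x : ℂ) : ℂ :=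
  (Complex.exp (h * x / 2) - Complex.exp (-(h * x) / 2)) /
    (Complex.exp (h / 2) - Complex.exp (-h / 2))

/-!
Up to the common factor `1 / sinh (h / 2)`, the bracket is `[x] = sinh (h x / 2)`, and the
identity is the three-term relation
`sinh (x - y) sinh (z - w) + sinh (x - z) sinh (w - y) + sinh (x - w) sinh (y - z) = 0`
at `x, y, z, w = h a / 2, h (b - 1) / 2, h c / 2, h d / 2`, which follows by expanding each
`sinh` of a difference.
-/

theorem Complex.sinh_sub_mul_sinh_sub_three_term (x y z w : ℂ) :
    sinh (x - y) * sinh (z - w) + sinh (x - z) * sinh (w - y)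
      + sinh (x - w) * sinh (y - z) = 0 := by
  simp only [Complex.sinh_sub]
  ring

theorem qbr_eq_sinh_div (h x : ℂ) :
    qbr h x = Complex.sinh (h * x / 2) / Complex.sinh (h / 2) := by
  rw [qbr, Complex.sinh, Complex.sinh, div_div_div_cancel_right₀ two_ne_zero, neg_div, neg_div]

theorem qbr_neg (h x : ℂ) : qbr h (-x) = -qbr h x := by
  rw [qbr_eq_sinh_div, qbr_eq_sinh_div, mul_neg, neg_div, Complex.sinh_neg, neg_div]

theorem qbr_three_term (h x y z w : ℂ) :
    qbr h (x - y) * qbr h (z - w) + qbr h (x - z) * qbr h (w - y)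
      + qbr h (x - w) * qbr h (y - z) = 0 := by
  have hsub : ∀ u v : ℂ, h * (u - v) / 2 = h * u / 2 - h * v / 2 := fun u v => by ring
  simp only [qbr_eq_sinh_div, hsub, div_mul_div_comm, ← add_div]
  rw [Complex.sinh_sub_mul_sinh_sub_three_term, zero_div]

theorem identity_A46_second_general (h : ℂ) (a b c d : ℂ)
    (h2 : qbr h (b - c - 1) ≠ 0) :
    -(qbr h (a - b + 1) * qbr h (c - d) / qbr h (c - b + 1))
      - qbr h (a - c) * qbr h (b - d - 1) / qbr h (b - c - 1) = -qbr h (a - d) := by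
  have key := qbr_three_term h a (b - 1) c d
  rw [show a - (b - 1) = a - b + 1 by ring, show d - (b - 1) = -(b - d - 1) by ring,
    show b - 1 - c = b - c - 1 by ring, qbr_neg] at key
  rw [show c - b + 1 = -(b - c - 1) by ring, qbr_neg]
  field_simp
  linear_combination key

/-- Second identity of (A46). -/
theorem identity_A46_second (h : ℂ) (hh : Complex.exp h ≠ 1) (a b c d : ℂ)
    (h1 : qbr h (c - b + 1) ≠ 0) (h2 : qbr h (b - c - 1) ≠ 0) :
    -(qbr h (a - b + 1) * qbr h (c - d) / qbr h (c - b + 1))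
      - qbr h (a - c) * qbr h (b - d - 1) / qbr h (b - c - 1) = -qbr h (a - d) :=
  identity_A46_second_general h a b c d h2
end

section
/- Let q be a nonzero complex number, let n ≥ 2 be an integer, fix j ∈ {1, …, n−1}, and let A₁, …, A_{n−1}, B₁, …, B_n, C₁, …, C_{n+1} be complex numbers such that all B_l are nonzero and the 2n+1 numbers q²A_j, B₁, …, B_n, q⁻²B₁, …, q⁻²B_n are pairwise distinct. Then the sum F_{n,j} = ∑_{l=1}^{n} ( ∏_{i=1}^{n+1} (B_l − C_i) · ∏_{i≠j, i=1}^{n−1} (B_l − A_i) ) / ( (A_j − q⁻²B_l) · B_l · ∏_{i≠l, i=1}^{n} (B_l − B_i)(B_l − q⁻²B_i) ) equals (q² − 1) · ( ∏_{i=1}^{n+1} (q²A_j − C_i) · ∏_{i≠j, i=1}^{n−1} (q²A_j − A_i) ) / ( ∏_{i=1}^{n} (q²A_j − B_i)(q²A_j − q⁻²B_i) ) − ∑_{l=1}^{n} ( ∏_{i=1}^{n+1} (B_l − q²C_i) · ∏_{i≠j, i=1}^{n−1} (B_l − q²A_i) ) / ( B_l · (q⁻²B_l − q²A_j) · ∏_{i≠l,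 i=1}^{n} (B_l − B_i)(B_l − q²B_i) ). (Identity (A17), obtained from the vanishing of the sum of all residues of the rational function f₁(z) = ∏_{i=1}^{n+1}(z − C_i)·∏_{i≠j}(z − A_i) / ( (z − q²A_j)·∏_{i=1}^{n}(z − B_i)(z − q⁻²B_i) ).) -/
/-!
The function `f₁ = P / N`, with `P(z) = ∏ (z - C i) * ∏_{i ≠ j} (z - A i)` and `N` the monic
polynomial with the `2n + 1` distinct simple roots `q²A_j`, `B_l`, `q⁻²B_l`, satisfies
`deg P ≤ deg N - 2`. Hence the sum of its residues `P(x) / N'(x) = P(x) / ∏_{y ≠ x} (x - y)` over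
the roots `x` of `N` vanishes: it is the coefficient of `z^(deg N - 1)` in the Lagrange interpolant
of `P`, which is `P` itself. The residue at `q²A_j` is the first term on the right, and the
residues at `B_l` and at `q⁻²B_l` are `-(q² - 1)⁻¹` times the `l`-th terms of the two sums.
-/

open Finset Polynomial

theorem Lagrange.sum_eval_div_prod_erase_eq_zero {F ι : Type*} [Field F] [DecidableEq ι]
    {s : Finset ι} {v : ι → F} (hvs : Set.InjOn v s) {P : F[X]} (hP : P.degree < ↑(#s - 1)) :
    ∑ i ∈ s, P.eval (v i) / ∏ j ∈ s.erase i, (v i - v j) = 0 := by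
  rw [← Lagrange.coeff_eq_sum hvs (hP.trans_le (by gcongr; omega))]
  exact coeff_eq_zero_of_degree_lt hP

namespace Finset

section
variable {α β : Type*} [DecidableEq α] [DecidableEq β]

theorem erase_none_insertNone (s : Finset α) :
    (insertNone s).erase none = s.map Function.Embedding.some := by
  ext (_ | x) <;> simp

theorem erase_some_insertNone (s : Finset α) (a : α) :
    (insertNone s).erase (some a) = insertNone (s.erase a) := by
  ext (_ | x) <;> simp

theorem erase_inl_disjSum (s : Finset α) (t : Finset β) (a : α) :
    (s.disjSum t).erase (.inl a) = (s.erase a).disjSum t := by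
  ext (x | x) <;> simp

theorem erase_inr_disjSum (s : Finset α) (t : Finset β) (b : β) :
    (s.disjSum t).erase (.inr b) = s.disjSum (t.erase b) := by
  ext (x | x) <;> simp

end

theorem prod_mul_sub_mul {ι R : Type*} [CommRing R] (s : Finset ι) (c x : R) (f : ι → R) :
    ∏ i ∈ s, (c * x - c * f i) = c ^ #s * ∏ i ∈ s, (x - f i) := by
  simp_rw [← mul_sub, prod_mul_distrib, prod_const]

theorem prod_inv_mul_sub {ι F : Type*} [Field F] {c : F} (hc : c ≠ 0) (s : Finset ι) (x : F)
    (f : ι → F) : ∏ i ∈ s, (c⁻¹ * x - f i) = c⁻¹ ^ #s * ∏ i ∈ s, (x - c * f i) := by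
  rw [← prod_mul_sub_mul]
  simp [inv_mul_cancel_left₀ hc]

end Finset

def residueNodes {ι F : Type*} [Mul F] (a r : F) (B : ι → F) : Option (ι ⊕ ι) → F :=
  fun o => o.elim a (Sum.elim B fun i => r * B i)

section
variable {ι F : Type*}

@[simp] theorem residueNodes_none [Mul F] (a r : F) (B : ι → F) :
    residueNodes a r B none = a := rfl

@[simp] theorem residueNodes_inl [Mul F] (a r : F) (B : ι → F) (i : ι) :
    residueNodes a r B (some (.inl i)) = B i := rfl

@[simp] theorem residueNodes_inr [Mul F] (a r : F) (B : ι → F) (i : ι) :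
    residueNodes a r B (some (.inr i)) = r * B i := rfl

theorem injOn_residueNodes [Field F] {a r : F} {B : ι → F} {s : Finset ι} (hr : r ≠ 0)
    (ha : ∀ i ∈ s, a ≠ B i) (har : ∀ i ∈ s, a ≠ r * B i)
    (hB : ∀ i ∈ s, ∀ k ∈ s, i ≠ k → B i ≠ B k) (hBr : ∀ i ∈ s, ∀ k ∈ s, B i ≠ r * B k) :
    Set.InjOn (residueNodes a r B) (insertNone (s.disjSum s)) := by
  rintro (_ | i | i) hi (_ | k | k) hk h <;>
    simp only [residueNodes_none, residueNodes_inl, residueNodes_inr, mem_coe,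
      some_mem_insertNone, inl_mem_disjSum, inr_mem_disjSum] at hi hk h
  all_goals grind [mul_left_cancel₀]

variable [Field F] [DecidableEq ι] {c : F}

theorem term_eq_neg_mul_residue_at_node (hc : c ≠ 0) (hc1 : c - 1 ≠ 0) (a N : F) (B : ι → F)
    {s : Finset ι} {l : ι} (hl : l ∈ s) :
    N / ((a - c⁻¹ * B l) * B l * ∏ i ∈ s.erase l, (B l - B i) * (B l - c⁻¹ * B i)) =
      -(c - 1) * (N / ((B l - c * a) *
        ((∏ i ∈ s.erase l, (B l - B i)) * ∏ i ∈ s, (B l - c⁻¹ * B i)))) := by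
  rw [← mul_prod_erase s (fun i => B l - c⁻¹ * B i) hl, prod_mul_distrib,
    show ∀ X Y : F, (B l - c * a) * (X * ((B l - c⁻¹ * B l) * Y))
      = -(c - 1) * ((a - c⁻¹ * B l) * B l * (X * Y)) by intro X Y; field_simp; ring,
    ← mul_div_assoc, mul_div_mul_left _ _ (neg_ne_zero.mpr hc1)]

theorem term_eq_neg_mul_residue_at_scaled_node (hc : c ≠ 0) (hc1 : c - 1 ≠ 0) (a : F)
    (A B C : ι → F) {s t u : Finset ι} {l : ι} (hl : l ∈ s) (hcard : #t + #u + 1 = 2 * #s) :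
    (∏ i ∈ t, (B l - c * C i)) * (∏ i ∈ u, (B l - c * A i)) /
        (B l * (c⁻¹ * B l - c * a) * ∏ i ∈ s.erase l, (B l - B i) * (B l - c * B i)) =
      -(c - 1) * ((∏ i ∈ t, (c⁻¹ * B l - C i)) * (∏ i ∈ u, (c⁻¹ * B l - A i)) /
        ((c⁻¹ * B l - c * a) *
          ((∏ i ∈ s, (c⁻¹ * B l - B i)) * ∏ i ∈ s.erase l, (c⁻¹ * B l - c⁻¹ * B i)))) := by
  have hs : #t + #u = #s + #(s.erase l) := by rw [card_erase_of_mem hl]; grind [card_pos]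
  rw [prod_mul_sub_mul (s.erase l) c⁻¹ (B l) B, prod_inv_mul_sub hc t, prod_inv_mul_sub hc u,
    prod_inv_mul_sub hc s, ← mul_prod_erase s (fun i => B l - c * B i) hl, prod_mul_distrib]
  generalize ∏ i ∈ t, (B l - c * C i) = P
  generalize ∏ i ∈ u, (B l - c * A i) = Q
  generalize ∏ i ∈ s.erase l, (B l - c * B i) = X
  generalize ∏ i ∈ s.erase l, (B l - B i) = Y
  have hpow : c⁻¹ ^ #t * c⁻¹ ^ #u = c⁻¹ ^ #s * c⁻¹ ^ #(s.erase l) := by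
    rw [← pow_add, ← pow_add, hs]
  have hk : c⁻¹ ^ #s * c⁻¹ ^ #(s.erase l) ≠ 0 := by simp [hc]
  rw [show c⁻¹ ^ #t * P * (c⁻¹ ^ #u * Q) = c⁻¹ ^ #s * c⁻¹ ^ #(s.erase l) * (P * Q) by
      linear_combination P * Q * hpow,
    show (c⁻¹ * B l - c * a) * (c⁻¹ ^ #s * ((B l - c * B l) * X) * (c⁻¹ ^ #(s.erase l) * Y)) =
      c⁻¹ ^ #s * c⁻¹ ^ #(s.erase l) * (-(c - 1) * (B l * (c⁻¹ * B l - c * a) * (Y * X))) by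
      ring,
    mul_div_mul_left _ _ hk, ← mul_div_assoc, mul_div_mul_left _ _ (neg_ne_zero.mpr hc1)]

end

theorem identity_A17_general (q : ℂ) (hq : q ≠ 0) (n : ℕ)
    (j : ℕ) (hj : j ∈ Finset.Icc 1 (n - 1))
    (A B C : ℕ → ℂ)
    (hAjB : ∀ i ∈ Finset.Icc 1 n, q ^ 2 * A j ≠ B i)
    (hAjBq : ∀ i ∈ Finset.Icc 1 n, q ^ 2 * A j ≠ (q ^ 2)⁻¹ * B i)
    (hBB : ∀ i ∈ Finset.Icc 1 n, ∀ t ∈ Finset.Icc 1 n, i ≠ t → B i ≠ B t)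
    (hBBq : ∀ i ∈ Finset.Icc 1 n, ∀ t ∈ Finset.Icc 1 n, B i ≠ (q ^ 2)⁻¹ * B t) :
    ∑ l ∈ Finset.Icc 1 n,
      ((∏ i ∈ Finset.Icc 1 (n + 1), (B l - C i)) *
          ∏ i ∈ (Finset.Icc 1 (n - 1)).erase j, (B l - A i)) /
        ((A j - (q ^ 2)⁻¹ * B l) * B l *
          ∏ i ∈ (Finset.Icc 1 n).erase l, (B l - B i) * (B l - (q ^ 2)⁻¹ * B i))
    = (q ^ 2 - 1) *
        ((∏ i ∈ Finset.Icc 1 (n + 1), (q ^ 2 * A j - C i)) *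
          ∏ i ∈ (Finset.Icc 1 (n - 1)).erase j, (q ^ 2 * A j - A i)) /
        (∏ i ∈ Finset.Icc 1 n, (q ^ 2 * A j - B i) * (q ^ 2 * A j - (q ^ 2)⁻¹ * B i))
      - ∑ l ∈ Finset.Icc 1 n,
        ((∏ i ∈ Finset.Icc 1 (n + 1), (B l - q ^ 2 * C i)) *
            ∏ i ∈ (Finset.Icc 1 (n - 1)).erase j, (B l - q ^ 2 * A i)) /
          (B l * ((q ^ 2)⁻¹ * B l - q ^ 2 * A j) *
            ∏ i ∈ (Finset.Icc 1 n).erase l, (B l - B i) * (B l - q ^ 2 * B i)) := by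
  have hn : 2 ≤ n := by grind
  have hq2 : q ^ 2 ≠ 0 := pow_ne_zero 2 hq
  have hq21 : q ^ 2 - 1 ≠ 0 := fun h =>
    hBBq 1 (by simp; omega) 1 (by simp; omega) (by rw [sub_eq_zero.mp h]; simp)
  have hcard : #(Icc 1 (n + 1)) + #((Icc 1 (n - 1)).erase j) + 1 = 2 * #(Icc 1 n) := by
    simp [card_erase_of_mem hj]; omega
  have residues_sum := Lagrange.sum_eval_div_prod_erase_eq_zero
    (injOn_residueNodes (inv_ne_zero hq2) hAjB hAjBq hBB hBBq)
    (P := Lagrange.nodal (Icc 1 (n + 1)) C * Lagrange.nodal ((Icc 1 (n - 1)).erase j) A) (by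
      rw [degree_mul, Lagrange.degree_nodal, Lagrange.degree_nodal, card_insertNone,
        card_disjSum, ← Nat.cast_add]
      exact_mod_cast (by omega))
  simp only [sum_insertNone, sum_disjSum, erase_none_insertNone, erase_some_insertNone,
    erase_inl_disjSum, erase_inr_disjSum, prod_map, prod_insertNone, prod_disjSum,
    Function.Embedding.some_apply, residueNodes_none, residueNodes_inl, residueNodes_inr,
    eval_mul, Lagrange.eval_nodal] at residues_sum
  rw [sum_congr rfl fun l hl => term_eq_neg_mul_residue_at_node hq2 hq21 _ _ B hl,
    sum_congr rfl fun l hl => term_eq_neg_mul_residue_at_scaled_node hq2 hq21 _ A B C hl hcard,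
    ← mul_sum, ← mul_sum, prod_mul_distrib, mul_div_assoc]
  linear_combination -(q ^ 2 - 1) * residues_sum

/-- Identity (A17). -/
theorem identity_A17 (q : ℂ) (hq : q ≠ 0) (n : ℕ) (hn : 2 ≤ n)
    (j : ℕ) (hj : j ∈ Finset.Icc 1 (n - 1))
    (A B C : ℕ → ℂ)
    (hB0 : ∀ l ∈ Finset.Icc 1 n, B l ≠ 0)
    (hAjB : ∀ i ∈ Finset.Icc 1 n, q ^ 2 * A j ≠ B i)
    (hAjBq : ∀ i ∈ Finset.Icc 1 n, q ^ 2 * A j ≠ (q ^ 2)⁻¹ * B i)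
    (hBB : ∀ i ∈ Finset.Icc 1 n, ∀ t ∈ Finset.Icc 1 n, i ≠ t → B i ≠ B t)
    (hBBq : ∀ i ∈ Finset.Icc 1 n, ∀ t ∈ Finset.Icc 1 n, B i ≠ (q ^ 2)⁻¹ * B t) :
    ∑ l ∈ Finset.Icc 1 n,
      ((∏ i ∈ Finset.Icc 1 (n + 1), (B l - C i)) *
          ∏ i ∈ (Finset.Icc 1 (n - 1)).erase j, (B l - A i)) /
        ((A j - (q ^ 2)⁻¹ * B l) * B l *
          ∏ i ∈ (Finset.Icc 1 n).erase l, (B l - B i) * (B l - (q ^ 2)⁻¹ * B i))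
    = (q ^ 2 - 1) *
        ((∏ i ∈ Finset.Icc 1 (n + 1), (q ^ 2 * A j - C i)) *
          ∏ i ∈ (Finset.Icc 1 (n - 1)).erase j, (q ^ 2 * A j - A i)) /
        (∏ i ∈ Finset.Icc 1 n, (q ^ 2 * A j - B i) * (q ^ 2 * A j - (q ^ 2)⁻¹ * B i))
      - ∑ l ∈ Finset.Icc 1 n,
        ((∏ i ∈ Finset.Icc 1 (n + 1), (B l - q ^ 2 * C i)) *
            ∏ i ∈ (Finset.Icc 1 (n - 1)).erase j, (B l - q ^ 2 * A i)) /
          (B l * ((q ^ 2)⁻¹ * B l - q ^ 2 * A j) *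
            ∏ i ∈ (Finset.Icc 1 n).erase l, (B l - B i) * (B l - q ^ 2 * B i)) :=
  identity_A17_general q hq n j hj A B C hAjB hAjBq hBB hBBq
end
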